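/- Let q = p^d with p prime and d ≥ 1, let C be a code in the Hamming graph H(m,q), and let X ≤ Aut(C) be such that C is X-alphabet-affine. Let G = ∏_{i∈M} K^{Q_i} ≤ B be the direct product over the entries of the induced groups K^{Q_i}, and let T = ∏_{i∈M} T_i ≤ B. Then T is a normal p-subgroup of G that contains every normal p-subgroup of G (so T is the largest normal p-subgroup O_p(G) of G), and T acts regularly on the vertex set V of H(m,q), i.e., for all vertices u,v there is exactly one element of T mapping u to v. -/

import Mathlib

open Equiv

namespace Paper

/-- A Hamming-graph automorphism of `Fin m → Q` given by entrywise permutations `h`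
and a permutation `σ` of the entries. -/
def IsQAutPair {m : ℕ} {Q : Type*} (g : Perm (Fin m → Q)) (h : Fin m → Perm Q)
    (σ : Perm (Fin m)) : Prop :=
  ∀ α i, g α i = h i (α (σ.symm i))

/-- `g` is an automorphism of the Hamming graph `H(m,q)`. -/
def IsQAut {m : ℕ} {Q : Type*} (g : Perm (Fin m → Q)) : Prop :=
  ∃ h σ, IsQAutPair g h σ

/-- The permutation group `X_i^{Q_i}` induced on the alphabet in entry `i`
by the stabiliser in `X` of the entry `i`. -/
def indQ {m : ℕ} {Q : Type*} (X : Set (Perm (Fin m → Q))) (i : Fin m) : Set (Perm Q) :=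
  {π | ∃ g ∈ X, ∃ h σ, IsQAutPair g h σ ∧ σ i = i ∧ h i = π}

/-- `C_s`, the set of vertices at Hamming distance exactly `s` from the code `C`. -/
def distSet {m : ℕ} {Q : Type*} [DecidableEq Q] (C : Set (Fin m → Q)) (s : ℕ) :
    Set (Fin m → Q) :=
  {v | (∃ c ∈ C, hammingDist v c = s) ∧ ∀ c ∈ C, s ≤ hammingDist v c}

/-- `C` is `(X,s)`-neighbour-transitive: `X` acts transitively on each of
`C = C_0, C_1, …, C_s`. -/
def NbrTrans {m : ℕ} {Q : Type*} [DecidableEq Q] (X : Set (Perm (Fin m → Q)))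
    (C : Set (Fin m → Q)) (s : ℕ) : Prop :=
  ∀ j ≤ s, ∀ u ∈ distSet C j, ∀ v ∈ distSet C j, ∃ g ∈ X, g u = v

/-- `δ` is the minimum distance of the code `C`. -/
def IsMinDist {m : ℕ} {Q : Type*} [DecidableEq Q] (C : Set (Fin m → Q)) (δ : ℕ) : Prop :=
  (∃ u ∈ C, ∃ v ∈ C, u ≠ v ∧ hammingDist u v = δ) ∧
  ∀ u ∈ C, ∀ v ∈ C, u ≠ v → δ ≤ hammingDist u v

/-- The alphabet `Q = F_p^d`. -/
abbrev QA (p d : ℕ) : Type := Fin d → ZMod p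

/-- The vertex set `V = (F_p^d)^M` of `H(m, p^d)`. -/
abbrev VA (p d m : ℕ) : Type := Fin m → QA p d

/-- The subgroup of `Sym(A)` consisting of all translations `v ↦ v + a`. -/
def TransSub (A : Type*) [AddCommGroup A] : Subgroup (Perm A) where
  carrier := {g : Perm A | ∃ a : A, ∀ v, g v = v + a}
  one_mem' := ⟨0, fun v => by simp⟩
  mul_mem' := fun {f g} hf hg => by
    obtain ⟨a, ha⟩ := hf
    obtain ⟨b, hb⟩ := hg
    exact ⟨b + a, fun v => by rw [Perm.mul_apply, hb, ha, add_assoc]⟩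
  inv_mem' := fun {f} hf => by
    obtain ⟨a, ha⟩ := hf
    refine ⟨-a, fun v => ?_⟩
    have h1 : f (v + -a) = v := by rw [ha]; abel
    calc f⁻¹ v = f⁻¹ (f (v + -a)) := by rw [h1]
      _ = v + -a := by first | exact f.symm_apply_apply (v + -a) | simp

/-- `K = X ∩ B`, the kernel of the action of `X` on the set of entries `M`:
the elements of `X` acting entrywise (with trivial permutation of `M`). -/
def KSet {p d m : ℕ} (X : Set (Perm (VA p d m))) : Set (Perm (VA p d m)) :=
  {g | g ∈ X ∧ ∃ h, IsQAutPair g h 1}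

/-- The group `K^{Q_i}` induced on the alphabet in entry `i` by `K = X ∩ B`. -/
def indK {p d m : ℕ} (X : Set (Perm (VA p d m))) (i : Fin m) : Set (Perm (QA p d)) :=
  {π | ∃ g ∈ X, ∃ h, IsQAutPair g h 1 ∧ h i = π}

/-- `C` is `X`-alphabet-affine: `X ≤ Aut(C)`, `K ≠ 1`, `X` is transitive on the entries,
and each `X_i^{Q_i}` is an affine 2-transitive group, i.e. it is 2-transitive on `Q_i`
and contains the translation group `T_i` as a normal subgroup. -/
def AlphabetAffine {p d m : ℕ} (X : Set (Perm (VA p d m))) (C : Set (VA p d m)) : Prop :=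
  (∀ g ∈ X, IsQAut g) ∧
  (∀ g ∈ X, g '' C = C) ∧
  (∃ g ∈ KSet X, g ≠ 1) ∧
  (∀ i j : Fin m, ∃ g ∈ X, ∃ h σ, IsQAutPair g h σ ∧ σ i = j) ∧
  (∀ i : Fin m,
    (∀ a b a' b' : QA p d, a ≠ b → a' ≠ b' → ∃ π ∈ indQ X i, π a = a' ∧ π b = b') ∧
    ((TransSub (QA p d) : Set (Perm (QA p d))) ⊆ indQ X i) ∧
    (∀ π ∈ indQ X i, ∀ t ∈ TransSub (QA p d), π * t * π⁻¹ ∈ TransSub (QA p d)))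


/-- The group `G = ∏_{i ∈ M} K^{Q_i} ≤ B`. -/
def GProd {p d m : ℕ} (X : Set (Perm (VA p d m))) : Set (Perm (VA p d m)) :=
  {g | ∃ h, IsQAutPair g h 1 ∧ ∀ i, h i ∈ indK X i}

/-! Every element of `G` normalises `T`, hence acts affinely on each alphabet, and
`T = ∏ T_i` is a regular elementary abelian `p`-group. Conjugating an element of a nontrivial
normal subgroup `N` of an affine 2-transitive group by a translation produces a nonzero
translation in `N`, and 2-transitivity then puts all of `T_i` into `N`; this applies to
`N = K^{Q_i}`, which is nontrivial because `K ≠ 1` and `X` is transitive on the entries.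
For `O_p(G) ≤ T`, project a normal `p`-subgroup of `G` to an entry: there it lies in
`O = O_p(K^{Q_i})`, which contains `T_i` and is normalised by `X_i^{Q_i}`. The fixed points
of the `p`-group `O_0` form a set of size divisible by `p` containing `0`, invariant under
the stabiliser of `0` in `X_i^{Q_i}`, which is transitive on nonzero vectors; so `O_0 = 1`
and `O = T_i`. -/

section Base

variable {m : ℕ} {Q : Type*}

/-- The base group `B = Sym(Q)^M` of `Aut(H(m,q))`. -/
def basePerm : (Fin m → Perm Q) →* Perm (Fin m → Q) where
  toFun h := Equiv.piCongrRight h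
  map_one' := rfl
  map_mul' _ _ := rfl

@[simp]
lemma basePerm_apply (h : Fin m → Perm Q) (α : Fin m → Q) (i : Fin m) :
    basePerm h α i = h i (α i) := rfl

lemma basePerm_injective :
    Function.Injective (basePerm : (Fin m → Perm Q) →* Perm (Fin m → Q)) := by
  intro h h' e
  funext i
  ext x
  simpa using congrFun (Equiv.congr_fun e fun _ => x) i

lemma isQAutPair_one_iff {g : Perm (Fin m → Q)} {h : Fin m → Perm Q} :
    IsQAutPair g h 1 ↔ basePerm h = g := by
  simp only [IsQAutPair, Equiv.ext_iff, funext_iff]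
  exact ⟨fun H α i => (H α i).symm, fun H α i => (H α i).symm⟩

namespace IsQAutPair

variable {g g' : Perm (Fin m → Q)} {h h' : Fin m → Perm Q} {σ σ' : Perm (Fin m)}

lemma one : IsQAutPair (1 : Perm (Fin m → Q)) 1 1 := fun _ _ => rfl

lemma mul (H : IsQAutPair g h σ) (H' : IsQAutPair g' h' σ') :
    IsQAutPair (g * g') (fun j => h j * h' (σ.symm j)) (σ * σ') := by
  intro α j
  simp [Perm.mul_apply, H (g' α), H' α]
  rfl

lemma inv (H : IsQAutPair g h σ) : IsQAutPair g⁻¹ (fun j => (h (σ j))⁻¹) σ⁻¹ := by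
  intro β j
  have hβ : g (fun l => (h (σ l))⁻¹ (β (σ l))) = β := by
    funext k
    simp [H _ k]
  conv_lhs => rw [← hβ]
  simp
  rfl

lemma conj_basePerm (H : IsQAutPair g h σ) (c : Fin m → Perm Q) :
    g * basePerm c * g⁻¹ = basePerm fun j => h j * c (σ.symm j) * (h j)⁻¹ := by
  rw [mul_inv_eq_iff_eq_mul]
  ext α j
  simp [H _ j]

end IsQAutPair

/-- `(P ∩ B)^{Q_i}`; for `P = X` this is `K^{Q_i}`. -/
def entryComp (P : Subgroup (Perm (Fin m → Q))) (i : Fin m) : Subgroup (Perm Q) :=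
  (P.comap basePerm).map (Pi.evalMonoidHom (fun _ => Perm Q) i)

def prodBase (H : Fin m → Subgroup (Perm Q)) : Subgroup (Perm (Fin m → Q)) :=
  (Subgroup.pi Set.univ H).map basePerm

variable {P : Subgroup (Perm (Fin m → Q))} {H N : Fin m → Subgroup (Perm Q)}

lemma mem_entryComp {i : Fin m} {π : Perm Q} :
    π ∈ entryComp P i ↔ ∃ h, basePerm h ∈ P ∧ h i = π := Iff.rfl

lemma mem_prodBase {g : Perm (Fin m → Q)} :
    g ∈ prodBase H ↔ ∃ h, (∀ i, h i ∈ H i) ∧ basePerm h = g := by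
  simp [prodBase, Subgroup.mem_pi]

lemma basePerm_mem_prodBase {h : Fin m → Perm Q} :
    basePerm h ∈ prodBase H ↔ ∀ i, h i ∈ H i := by
  simp [prodBase, Subgroup.mem_map_iff_mem basePerm_injective, Subgroup.mem_pi]

lemma coe_prodBase : (prodBase H : Set (Perm (Fin m → Q))) =
    {g | ∃ h, IsQAutPair g h 1 ∧ ∀ i, h i ∈ H i} := by
  ext g
  simp [mem_prodBase, isQAutPair_one_iff, and_comm]

lemma prodBase_mono (hHN : ∀ i, H i ≤ N i) : prodBase H ≤ prodBase N :=
  Subgroup.map_mono fun _ hh i _ => hHN i (hh i trivial)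

lemma conj_mem_prodBase (hHN : ∀ i, ∀ π ∈ H i, ∀ t ∈ N i, π * t * π⁻¹ ∈ N i)
    {g t : Perm (Fin m → Q)} (hg : g ∈ prodBase H) (ht : t ∈ prodBase N) :
    g * t * g⁻¹ ∈ prodBase N := by
  obtain ⟨h, hh, rfl⟩ := mem_prodBase.1 hg
  obtain ⟨c, hc, rfl⟩ := mem_prodBase.1 ht
  rw [← map_inv, ← map_mul, ← map_mul, basePerm_mem_prodBase]
  exact fun i => hHN i _ (hh i) _ (hc i)

lemma entryComp_le_of_le_prodBase (hP : P ≤ prodBase H) (i : Fin m) : entryComp P i ≤ H i := by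
  rintro _ ⟨h, hh, rfl⟩
  exact basePerm_mem_prodBase.1 (hP hh) i

lemma le_prodBase_entryComp (hP : P ≤ prodBase H) : P ≤ prodBase (entryComp P) := by
  intro g hg
  obtain ⟨h, -, rfl⟩ := mem_prodBase.1 (hP hg)
  exact basePerm_mem_prodBase.2 fun i => ⟨h, hg, rfl⟩

lemma conj_mem_entryComp_of_normalizes
    (hP : ∀ g ∈ prodBase H, ∀ x ∈ P, g * x * g⁻¹ ∈ P) {i : Fin m} {κ s : Perm Q}
    (hκ : κ ∈ H i) (hs : s ∈ entryComp P i) : κ * s * κ⁻¹ ∈ entryComp P i := by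
  obtain ⟨h, hh, rfl⟩ := hs
  have hκ' : basePerm (Pi.mulSingle i κ) ∈ prodBase H := by
    rw [basePerm_mem_prodBase]
    intro j
    rcases eq_or_ne j i with rfl | hj
    · simpa using hκ
    · simp [hj, (H j).one_mem]
  refine ⟨Pi.mulSingle i κ * h * (Pi.mulSingle i κ)⁻¹, ?_, by simp⟩
  simpa using hP _ hκ' _ hh

lemma isPGroup_entryComp {p : ℕ} (hP : IsPGroup p P) (i : Fin m) :
    IsPGroup p (entryComp P i) :=
  (hP.comap_of_injective _ basePerm_injective).map _

end Base

section Translations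

variable {A : Type*} [AddCommGroup A]

lemma mem_transSub_iff {t : Perm A} : t ∈ TransSub A ↔ ∃ a, Equiv.addRight a = t :=
  exists_congr fun _ => by rw [Equiv.ext_iff]; exact forall_congr' fun _ => eq_comm

lemma addRight_mem_transSub (a : A) : Equiv.addRight a ∈ TransSub A :=
  mem_transSub_iff.2 ⟨a, rfl⟩

lemma isPGroup_transSub (p : ℕ) [Module (ZMod p) A] : IsPGroup p (TransSub A) := by
  rintro ⟨t, ht⟩
  obtain ⟨a, rfl⟩ := mem_transSub_iff.1 ht
  refine ⟨1, Subtype.ext ?_⟩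
  simp [Equiv.nsmul_addRight, ← Nat.cast_smul_eq_nsmul (ZMod p)]

lemma existsUnique_mem_transSub_apply_eq (u v : A) :
    ∃! t : Perm A, t ∈ TransSub A ∧ t u = v := by
  refine ⟨Equiv.addRight (v - u), ⟨addRight_mem_transSub _, by simp⟩, ?_⟩
  rintro _ ⟨ht, htu⟩
  obtain ⟨a, rfl⟩ := mem_transSub_iff.1 ht
  simp [← htu]

lemma transSub_pi {m : ℕ} : TransSub (Fin m → A) = prodBase fun _ => TransSub A := by
  ext t
  rw [mem_transSub_iff, mem_prodBase]
  constructor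
  · rintro ⟨a, rfl⟩
    exact ⟨fun i => Equiv.addRight (a i), fun i => addRight_mem_transSub _, rfl⟩
  · rintro ⟨h, hh, rfl⟩
    choose a ha using fun i => mem_transSub_iff.1 (hh i)
    refine ⟨a, ?_⟩
    ext v i
    simp [← ha]

lemma conj_addRight_of_normalizes {π : Perm A}
    (hπ : ∀ t ∈ TransSub A, π * t * π⁻¹ ∈ TransSub A) (a : A) :
    π * Equiv.addRight a * π⁻¹ = Equiv.addRight (π a - π 0) := by
  obtain ⟨b, hb⟩ := mem_transSub_iff.1 (hπ _ (addRight_mem_transSub a))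
  have hπa : π a = π 0 + b := by simpa using (Equiv.congr_fun hb (π 0)).symm
  rw [← hb, hπa, add_sub_cancel_left]

end Translations

def IsStabilizerTransitive {A : Type*} (G : Subgroup (Perm A)) (x₀ : A) : Prop :=
  ∀ a b, a ≠ x₀ → b ≠ x₀ → ∃ π ∈ G, π x₀ = x₀ ∧ π a = b

section AffineNormal

variable {A : Type*} [AddCommGroup A] {G N : Subgroup (Perm A)}

lemma exists_addRight_mem_of_normalizes (hTG : TransSub A ≤ G)
    (hGT : ∀ π ∈ G, ∀ t ∈ TransSub A, π * t * π⁻¹ ∈ TransSub A) (hNG : N ≤ G)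
    (hGN : ∀ π ∈ G, ∀ n ∈ N, π * n * π⁻¹ ∈ N) (hN : N ≠ ⊥) :
    ∃ c ≠ 0, Equiv.addRight c ∈ N := by
  obtain ⟨⟨n, hn⟩, hn1⟩ := Subgroup.ne_bot_iff_exists_ne_one.1 hN
  -- `n` is affine, so the commutator `n t_a n⁻¹ t_a⁻¹ ∈ N` is a translation
  have hcomm : ∀ a, Equiv.addRight (n a - n 0 - a) ∈ N := by
    intro a
    have hmem := N.mul_mem hn (hGN _ (hTG (addRight_mem_transSub a)) _ (N.inv_mem hn))
    rwa [← mul_assoc, ← mul_assoc, conj_addRight_of_normalizes (hGT n (hNG hn)),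
      Equiv.neg_addRight, ← Equiv.addRight_add, ← sub_eq_neg_add] at hmem
  by_cases htr : ∃ a, n a - n 0 - a ≠ 0
  · obtain ⟨a, ha⟩ := htr
    exact ⟨_, ha, hcomm a⟩
  · push Not at htr
    have hn' : n = Equiv.addRight (n 0) := by
      ext v
      simpa [sub_sub, sub_eq_zero, add_comm] using htr v
    refine ⟨n 0, fun h0 => hn1 (Subtype.ext ?_), hn' ▸ hn⟩
    change n = 1
    rw [hn', h0, Equiv.addRight_zero]

lemma transSub_le_of_normalizes (hTG : TransSub A ≤ G)
    (hGT : ∀ π ∈ G, ∀ t ∈ TransSub A, π * t * π⁻¹ ∈ TransSub A)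
    (hG : IsStabilizerTransitive G 0) (hNG : N ≤ G) (hGN : ∀ π ∈ G, ∀ n ∈ N, π * n * π⁻¹ ∈ N)
    (hN : N ≠ ⊥) : TransSub A ≤ N := by
  obtain ⟨c, hc, hcN⟩ := exists_addRight_mem_of_normalizes hTG hGT hNG hGN hN
  intro t ht
  obtain ⟨e, rfl⟩ := mem_transSub_iff.1 ht
  rcases eq_or_ne e 0 with rfl | he
  · simp [Equiv.addRight_zero, N.one_mem]
  · obtain ⟨π, hπ, hπ0, hπc⟩ := hG c e hc he
    have hconj := hGN π hπ _ hcN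
    rwa [conj_addRight_of_normalizes (hGT π hπ), hπ0, hπc, sub_zero] at hconj

end AffineNormal

section PCore

variable (p : ℕ) (Γ : Type*) [Group Γ]

/-- `O_p(Γ)`. -/
def pCore : Subgroup Γ :=
  sSup {N | N.Normal ∧ IsPGroup p N}

variable {p Γ}

lemma le_pCore {N : Subgroup Γ} [hN : N.Normal] (hNp : IsPGroup p N) : N ≤ pCore p Γ :=
  le_sSup ⟨hN, hNp⟩

lemma isPGroup_pCore : IsPGroup p (pCore p Γ) :=
  Sylow.sSup_of_normal _ (fun _ hN => hN.2) fun _ hN => hN.1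

instance pCore_characteristic : (pCore p Γ).Characteristic := by
  refine Subgroup.characteristic_iff_map_le.2 fun φ => Subgroup.map_le_iff_le_comap.2 ?_
  refine sSup_le fun N ⟨hN, hNp⟩ => Subgroup.map_le_iff_le_comap.1 ?_
  have := hN.map φ.toMonoidHom φ.surjective
  exact le_pCore (hNp.map _)

lemma le_map_subtype_pCore {H N : Subgroup Γ} (hNH : N ≤ H)
    (hHN : ∀ h ∈ H, ∀ n ∈ N, h * n * h⁻¹ ∈ N) (hNp : IsPGroup p N) :
    N ≤ (pCore p H).map H.subtype := by
  have : (N.subgroupOf H).Normal :=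
    ⟨fun n hn h => Subgroup.mem_subgroupOf.2 (hHN h h.2 n hn)⟩
  have hle := le_pCore (hNp.of_equiv (Subgroup.subgroupOfEquivOfLe hNH).symm)
  exact fun x hx => ⟨⟨x, hNH hx⟩, hle (Subgroup.mem_subgroupOf.2 hx), rfl⟩

lemma conj_mem_map_subtype_of_characteristic {H : Subgroup Γ} {L : Subgroup H}
    [hL : L.Characteristic] {g : Γ} (hg : ∀ h ∈ H, g * h * g⁻¹ ∈ H)
    (hg' : ∀ h ∈ H, g⁻¹ * h * g ∈ H) {x : Γ} (hx : x ∈ L.map H.subtype) :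
    g * x * g⁻¹ ∈ L.map H.subtype := by
  let φ : H ≃* H :=
    { toFun := fun k => ⟨g * k * g⁻¹, hg k k.2⟩
      invFun := fun k => ⟨g⁻¹ * k * g, hg' k k.2⟩
      left_inv := fun k => Subtype.ext (by group)
      right_inv := fun k => Subtype.ext (by group)
      map_mul' := fun k l => Subtype.ext (by simp [mul_assoc]) }
  obtain ⟨y, hy, rfl⟩ := hx
  exact ⟨φ y, Subgroup.characteristic_iff_map_le.1 hL φ ⟨y, hy, rfl⟩, rfl⟩

end PCore

section FixedPoints

variable {p : ℕ} [Fact p.Prime] {A : Type*} [Finite A]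

lemma eq_one_of_isPGroup_of_normalizes (hA : p ∣ Nat.card A) {G O : Subgroup (Perm A)}
    {x₀ : A} (hG : IsStabilizerTransitive G x₀) (hOp : IsPGroup p O)
    (hGO : ∀ g ∈ G, ∀ x ∈ O, g * x * g⁻¹ ∈ O) {ρ : Perm A} (hρ : ρ ∈ O)
    (hρ₀ : ρ x₀ = x₀) : ρ = 1 := by
  let R : Subgroup (Perm A) := O ⊓ MulAction.stabilizer (Perm A) x₀
  obtain ⟨c, hc, hcx₀⟩ := (hOp.to_le (inf_le_left : R ≤ O))
    |>.exists_fixed_point_of_prime_dvd_card_of_fixed_point A hA (a := x₀) fun r => r.2.2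
  ext v
  rcases eq_or_ne v x₀ with rfl | hv
  · exact hρ₀
  obtain ⟨π, hπ, hπ₀, hπc⟩ := hG c v (Ne.symm hcx₀) hv
  have hconj : π⁻¹ * ρ * π ∈ R := by
    refine ⟨by simpa using hGO π⁻¹ (G.inv_mem hπ) ρ hρ, ?_⟩
    simp [MulAction.mem_stabilizer_iff, Perm.smul_def, Equiv.symm_apply_eq, hπ₀, hρ₀]
  have hfix : π⁻¹ (ρ (π c)) = c := hc ⟨_, hconj⟩
  rw [← hπc]
  simpa using congrArg π hfix

end FixedPoints

lemma le_transSub_of_isPGroup_of_normalizes {p : ℕ} [Fact p.Prime] {A : Type*} [AddCommGroup A]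
    [Finite A] (hA : p ∣ Nat.card A) (hT : IsPGroup p (TransSub A)) {G K S : Subgroup (Perm A)}
    (hG : IsStabilizerTransitive G 0)
    (hGT : ∀ g ∈ G, ∀ t ∈ TransSub A, g * t * g⁻¹ ∈ TransSub A)
    (hKG : K ≤ G) (hGK : ∀ g ∈ G, ∀ k ∈ K, g * k * g⁻¹ ∈ K) (hTK : TransSub A ≤ K)
    (hSK : S ≤ K) (hKS : ∀ k ∈ K, ∀ s ∈ S, k * s * k⁻¹ ∈ S) (hS : IsPGroup p S) :
    S ≤ TransSub A := by
  set O := (pCore p K).map K.subtype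
  have hSO : S ≤ O := le_map_subtype_pCore hSK hKS hS
  have hTO : TransSub A ≤ O := le_map_subtype_pCore hTK (fun k hk => hGT k (hKG hk)) hT
  have hGO : ∀ g ∈ G, ∀ x ∈ O, g * x * g⁻¹ ∈ O := fun g hg _ hx =>
    conj_mem_map_subtype_of_characteristic (hGK g hg)
      (by simpa using hGK g⁻¹ (G.inv_mem hg)) hx
  intro x hx
  have hx₀ : (Equiv.addRight (x 0))⁻¹ * x = 1 :=
    eq_one_of_isPGroup_of_normalizes hA hG (isPGroup_pCore.map _) hGO
      (O.mul_mem (O.inv_mem (hTO (addRight_mem_transSub _))) (hSO hx)) (by simp)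
  rw [inv_mul_eq_one] at hx₀
  exact hx₀ ▸ addRight_mem_transSub _

section InducedGroups

variable {m : ℕ} {Q : Type*} (X : Subgroup (Perm (Fin m → Q)))

def indQSub (i : Fin m) : Subgroup (Perm Q) where
  carrier := indQ (X : Set (Perm (Fin m → Q))) i
  one_mem' := ⟨1, X.one_mem, 1, 1, IsQAutPair.one, rfl, rfl⟩
  mul_mem' := by
    rintro _ _ ⟨g, hg, h, σ, H, hσ, rfl⟩ ⟨g', hg', h', σ', H', hσ', rfl⟩
    refine ⟨g * g', X.mul_mem hg hg', _, _, H.mul H', by simp [hσ, hσ'], ?_⟩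
    simp [(Equiv.symm_apply_eq σ).2 hσ.symm]
  inv_mem' := by
    rintro _ ⟨g, hg, h, σ, H, hσ, rfl⟩
    exact ⟨g⁻¹, X.inv_mem hg, _, _, H.inv, by simp [(Equiv.symm_apply_eq σ).2 hσ.symm],
      by simp [hσ]⟩

variable {X}

lemma entryComp_le_indQSub (i : Fin m) : entryComp X i ≤ indQSub X i := by
  rintro _ ⟨h, hh, rfl⟩
  exact ⟨basePerm h, hh, h, 1, isQAutPair_one_iff.2 rfl, rfl, rfl⟩

lemma mem_entryComp_of_isQAutPair {g : Perm (Fin m → Q)} {h c : Fin m → Perm Q}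
    {σ : Perm (Fin m)} (hg : g ∈ X) (H : IsQAutPair g h σ) (hc : basePerm c ∈ X) (i : Fin m) :
    h i * c (σ.symm i) * (h i)⁻¹ ∈ entryComp X i := by
  refine mem_entryComp.2 ⟨fun j => h j * c (σ.symm j) * (h j)⁻¹, ?_, rfl⟩
  rw [← H.conj_basePerm]
  exact X.mul_mem (X.mul_mem hg hc) (X.inv_mem hg)

lemma conj_mem_entryComp {i : Fin m} {π κ : Perm Q} (hπ : π ∈ indQSub X i)
    (hκ : κ ∈ entryComp X i) : π * κ * π⁻¹ ∈ entryComp X i := by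
  obtain ⟨g, hg, h, σ, H, hσ, rfl⟩ := hπ
  obtain ⟨c, hc, rfl⟩ := hκ
  simpa [(Equiv.symm_apply_eq σ).2 hσ.symm] using mem_entryComp_of_isQAutPair hg H hc i

lemma entryComp_ne_bot (hK : ∃ g ∈ X, g ≠ 1 ∧ ∃ h, IsQAutPair g h 1)
    (hX : ∀ i j : Fin m, ∃ g ∈ X, ∃ h σ, IsQAutPair g h σ ∧ σ i = j) (i : Fin m) :
    entryComp X i ≠ ⊥ := by
  obtain ⟨_, hcX, hc1, c, Hc⟩ := hK
  obtain rfl := isQAutPair_one_iff.1 Hc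
  obtain ⟨i₀, hi₀⟩ : ∃ i₀, c i₀ ≠ 1 := by
    by_contra! hc
    exact hc1 (by rw [funext hc]; exact map_one _)
  obtain ⟨g, hg, h, σ, H, hσ⟩ := hX i₀ i
  have hmem := mem_entryComp_of_isQAutPair hg H hcX i
  rw [(Equiv.symm_apply_eq σ).2 hσ.symm] at hmem
  refine Subgroup.ne_bot_iff_exists_ne_one.2 ⟨⟨_, hmem⟩, fun h1 => hi₀ ?_⟩
  simpa using congrArg Subtype.val h1

end InducedGroups

lemma coe_entryComp {p d m : ℕ} (X : Subgroup (Perm (VA p d m))) (i : Fin m) :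
    (entryComp X i : Set (Perm (QA p d))) = indK (X : Set (Perm (VA p d m))) i := by
  ext π
  simp only [SetLike.mem_coe, mem_entryComp, indK, Set.mem_ofPred_eq, isQAutPair_one_iff]
  exact ⟨fun ⟨h, hh, hπ⟩ => ⟨_, hh, h, rfl, hπ⟩,
    fun ⟨_, hg, h, hgh, hπ⟩ => ⟨h, hgh ▸ hg, hπ⟩⟩

lemma gProd_eq_prodBase {p d m : ℕ} (X : Subgroup (Perm (VA p d m))) :
    GProd (X : Set (Perm (VA p d m))) = prodBase (entryComp X) := by
  simp only [GProd, coe_prodBase, ← coe_entryComp, SetLike.mem_coe]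

theorem stmt2 (p d m : ℕ) (hp : p.Prime) (hd : 1 ≤ d)
    (C : Set (VA p d m)) (X : Subgroup (Perm (VA p d m)))
    (hAff : AlphabetAffine (X : Set (Perm (VA p d m))) C) :
    -- the translation group of `V` is exactly `∏_{i ∈ M} T_i`
    ((TransSub (VA p d m) : Set (Perm (VA p d m))) =
      {g | ∃ h, IsQAutPair g h 1 ∧ ∀ i, h i ∈ TransSub (QA p d)}) ∧
    -- `T` is a normal `p`-subgroup of `G`
    ((TransSub (VA p d m) : Set (Perm (VA p d m))) ⊆ GProd (X : Set (Perm (VA p d m)))) ∧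
    (∀ g ∈ GProd (X : Set (Perm (VA p d m))), ∀ t ∈ TransSub (VA p d m),
      g * t * g⁻¹ ∈ TransSub (VA p d m)) ∧
    IsPGroup p (TransSub (VA p d m)) ∧
    -- `T` contains every normal `p`-subgroup of `G`, i.e. `T = O_p(G)`
    (∀ P : Subgroup (Perm (VA p d m)),
      (P : Set (Perm (VA p d m))) ⊆ GProd (X : Set (Perm (VA p d m))) →
      IsPGroup p P →
      (∀ g ∈ GProd (X : Set (Perm (VA p d m))), ∀ t ∈ P, g * t * g⁻¹ ∈ P) →
      P ≤ TransSub (VA p d m)) ∧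
    -- `T` acts regularly on the vertex set
    (∀ u v : VA p d m, ∃! t : Perm (VA p d m), t ∈ TransSub (VA p d m) ∧ t u = v) := by
  have := Fact.mk hp
  obtain ⟨-, -, ⟨g, ⟨hgX, hg⟩, hg1⟩, hX, hQ⟩ := hAff
  have hstab (i : Fin m) : IsStabilizerTransitive (indQSub X i) 0 := fun a b ha hb => by
    obtain ⟨π, hπ, hπa, hπ0⟩ := (hQ i).1 a 0 b 0 ha hb
    exact ⟨π, hπ, hπ0, hπa⟩
  have hTK (i : Fin m) : TransSub (QA p d) ≤ entryComp X i :=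
    transSub_le_of_normalizes (hQ i).2.1 (hQ i).2.2 (hstab i) (entryComp_le_indQSub i)
      (fun _ hπ _ hκ => conj_mem_entryComp hπ hκ) (entryComp_ne_bot ⟨g, hgX, hg1, hg⟩ hX i)
  have hcard : p ∣ Nat.card (QA p d) := by
    simpa using dvd_pow_self p (by omega : d ≠ 0)
  rw [gProd_eq_prodBase]
  refine ⟨by rw [transSub_pi, coe_prodBase], (prodBase_mono hTK).trans' transSub_pi.le, ?_,
    isPGroup_transSub p, fun P hPG hPp hPn => ?_, existsUnique_mem_transSub_apply_eq⟩
  · rw [transSub_pi]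
    exact fun _ hg _ ht =>
      conj_mem_prodBase (fun i _ hπ => (hQ i).2.2 _ (entryComp_le_indQSub i hπ)) hg ht
  · refine (le_prodBase_entryComp hPG).trans ((prodBase_mono fun i => ?_).trans transSub_pi.ge)
    exact le_transSub_of_isPGroup_of_normalizes hcard (isPGroup_transSub p) (hstab i) (hQ i).2.2
      (entryComp_le_indQSub i) (fun _ hπ _ hκ => conj_mem_entryComp hπ hκ) (hTK i)
      (entryComp_le_of_le_prodBase hPG i)
      (fun _ hκ _ hs => conj_mem_entryComp_of_normalizes hPn hκ hs) (isPGroup_entryComp hPp i)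

end Paper
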